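/- arXiv:2312.11546 — 2 statements merged into one kernel-verified Lean document; each statement's English description precedes it below -/
import Mathlib

section
/- Define y ∈* x iff y ε ι⁻¹(x), i.e., there exists a class X with y ε X and x = ι(X). Then ∈* satisfies Extensionality: if ∀z (z ∈* x ↔ z ∈* y) then x = y. -/
/-- A two-sorted signature for Class Ordering Theory: `O` is the sort of
ordinals, `C` the sort of (flat, possibly non-extensional) classes of
ordinals, with membership `mem`, the prior relation `prec`, and the (partial)
indexing function `iota` given as a functional relation. -/
structure COT (O : Type*) (C : Type*) where
  mem : O → C → Prop
  prec : C → C → Prop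
  iota : C → O → Prop

namespace COT

variable {O C : Type*} (S : COT O C)

/-- Coextensionality of classes. -/
def equiv (X Y : C) : Prop := ∀ z, S.mem z X ↔ S.mem z Y

/-- `X` is a singleton class of `x`. -/
def isSing (x : O) (X : C) : Prop := ∀ z, S.mem z X ↔ z = x

/-- `x < y` iff `{x} ≺ {y}` (for all classes realizing the singletons). -/
def lt (x y : O) : Prop := ∀ X Y, S.isSing x X → S.isSing y Y → S.prec X Y

/-- `x ≤ y`. -/
def le (x y : O) : Prop := S.lt x y ∨ x = y

/-- `l` is the least ordinal strictly above all elements of `X` (the limit of `X`). -/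
def isLim (X : C) (l : O) : Prop :=
  (∀ x, S.mem x X → S.lt x l) ∧ ∀ l', (∀ x, S.mem x X → S.lt x l') → S.le l l'

/-- `X` is bounded: it has a limit. -/
def bnd (X : C) : Prop := ∃ l, S.isLim X l

/-- `Y` is a subclass of `X`. -/
def subclass (Y X : C) : Prop := ∀ z, S.mem z Y → S.mem z X

/-- Equinumerosity: there is a class bijection between `X` and `Y`. -/
def equinum (X Y : C) : Prop :=
  ∃ R : O → O → Prop, (∀ a b, R a b → S.mem a X ∧ S.mem b Y) ∧
    (∀ a, S.mem a X → ∃! b, R a b) ∧ (∀ b, S.mem b Y → ∃! a, R a b)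

/-- `i = lim {ι(Y) : Y ≺ X}`: `i` is the least ordinal strictly above all
indices of classes prior to `X`. -/
def indexSpec (X : C) (i : O) : Prop :=
  (∀ Y j, S.prec Y X → S.iota Y j → S.lt j i) ∧
    ∀ i', (∀ Y j, S.prec Y X → S.iota Y j → S.lt j i') → S.le i i'

/-- The interpreted set membership: `y ∈* x` iff `y ε ι⁻¹(x)`. -/
def memStar (y x : O) : Prop := ∃ X, S.mem y X ∧ S.iota X x

/-- The axioms of COT. -/
structure Axioms : Prop where
  /-- Comprehension. -/
  comp : ∀ P : O → Prop, ∃ X, ∀ x, S.mem x X ↔ P x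
  /-- `≺` is transitive. -/
  prec_trans : ∀ X Y Z, S.prec X Y → S.prec Y Z → S.prec X Z
  /-- `≺` is co-connected. -/
  coConnected : ∀ X Y, ¬ S.equiv X Y ↔ (S.prec X Y ∨ S.prec Y X)
  /-- `≺` is well-founded (schema). -/
  wf : ∀ P : C → Prop, (∃ X, P X) → ∃ M, P M ∧ ∀ Y, P Y → ¬ S.prec Y M
  /-- Respective: `lim X ≤ y ε Y → X ≺ Y`. -/
  respective : ∀ X Y l y, S.isLim X l → S.le l y → S.mem y Y → S.prec X Y
  /-- `ι` is a partial function. -/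
  iota_fun : ∀ X i j, S.iota X i → S.iota X j → i = j
  /-- Indexing: every bounded class has an index. -/
  indexing : ∀ X, S.bnd X → ∃ i, S.iota X i
  /-- The index satisfies `ι(X) = lim {ι(Y) : Y ≺ X}`. -/
  iota_spec : ∀ X i, S.iota X i → S.indexSpec X i
  /-- Infinity: there is a nonzero ordinal closed under successor from below. -/
  infinity : ∃ l : O, (∃ k, S.lt k l) ∧ ∀ x, S.lt x l → ∃ y, S.lt x y ∧ S.lt y l
  /-- Boundedness: a class equinumerous with a bounded class is bounded. -/
  boundedness : ∀ X Y, S.bnd X → S.equinum X Y → S.bnd Y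

end COT

namespace COT

section Lemmas

variable {O C : Type*} {S : COT O C}

lemma equiv_refl' (X : C) : S.equiv X X := fun _ => Iff.rfl

lemma equiv_symm' {X Y : C} (h : S.equiv X Y) : S.equiv Y X := fun z => (h z).symm

lemma equiv_trans' {X Y Z : C} (h1 : S.equiv X Y) (h2 : S.equiv Y Z) : S.equiv X Z :=
  fun z => (h1 z).trans (h2 z)

lemma prec_irrefl' (hS : S.Axioms) (X : C) : ¬ S.prec X X := fun h =>
  ((hS.coConnected X X).2 (Or.inl h)) (equiv_refl' X)

lemma prec_congr_left' (hS : S.Axioms) {X X' Y : C} (he : S.equiv X X') (hp : S.prec X Y) :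
    S.prec X' Y := by
  have hne : ¬ S.equiv X' Y := fun h =>
    ((hS.coConnected X Y).2 (Or.inl hp)) (equiv_trans' he h)
  rcases (hS.coConnected X' Y).1 hne with h | h
  · exact h
  · exact absurd he ((hS.coConnected X X').2 (Or.inl (hS.prec_trans X Y X' hp h)))

lemma prec_congr_right' (hS : S.Axioms) {X Y Y' : C} (he : S.equiv Y Y') (hp : S.prec X Y) :
    S.prec X Y' := by
  have hne : ¬ S.equiv X Y' := fun h =>
    ((hS.coConnected X Y).2 (Or.inl hp)) (equiv_trans' h (equiv_symm' he))
  rcases (hS.coConnected X Y').1 hne with h | h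
  · exact h
  · exact absurd he ((hS.coConnected Y Y').2 (Or.inr (hS.prec_trans Y' X Y h hp)))

lemma sing_exists' (hS : S.Axioms) (x : O) : ∃ X, S.isSing x X := hS.comp (· = x)

lemma sing_equiv' {x : O} {X X' : C} (h : S.isSing x X) (h' : S.isSing x X') :
    S.equiv X X' := fun z => (h z).trans (h' z).symm

lemma lt_of_prec_sing' (hS : S.Axioms) {x y : O} {X Y : C} (hX : S.isSing x X)
    (hY : S.isSing y Y) (hp : S.prec X Y) : S.lt x y := by
  intro X' Y' hX' hY'
  exact prec_congr_right' hS (sing_equiv' hY hY')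
    (prec_congr_left' hS (sing_equiv' hX hX') hp)

lemma lt_irrefl' (hS : S.Axioms) (x : O) : ¬ S.lt x x := by
  intro h
  obtain ⟨X, hX⟩ := sing_exists' hS x
  exact prec_irrefl' hS X (h X X hX hX)

lemma lt_trans' (hS : S.Axioms) {x y z : O} (h1 : S.lt x y) (h2 : S.lt y z) : S.lt x z := by
  intro X Z hX hZ
  obtain ⟨Y, hY⟩ := sing_exists' hS y
  exact hS.prec_trans X Y Z (h1 X Y hX hY) (h2 Y Z hY hZ)

lemma lt_trichotomy' (hS : S.Axioms) (x y : O) : x = y ∨ S.lt x y ∨ S.lt y x := by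
  by_cases hxy : x = y
  · exact Or.inl hxy
  obtain ⟨X, hX⟩ := sing_exists' hS x
  obtain ⟨Y, hY⟩ := sing_exists' hS y
  have hne : ¬ S.equiv X Y := fun h => hxy ((hY x).1 ((h x).1 ((hX x).2 rfl)))
  rcases (hS.coConnected X Y).1 hne with h | h
  · exact Or.inr (Or.inl (lt_of_prec_sing' hS hX hY h))
  · exact Or.inr (Or.inr (lt_of_prec_sing' hS hY hX h))

lemma le_antisymm' (hS : S.Axioms) {x y : O} (h1 : S.le x y) (h2 : S.le y x) : x = y := by
  rcases h1 with h1 | h1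
  · rcases h2 with h2 | h2
    · exact absurd (lt_trans' hS h1 h2) (lt_irrefl' hS x)
    · exact h2.symm
  · exact h1

/-- well-foundedness transferred to ordinals -/
lemma wf_lt' (hS : S.Axioms) (Q : O → Prop) (hQ : ∃ x, Q x) :
    ∃ m, Q m ∧ ∀ y, Q y → ¬ S.lt y m := by
  obtain ⟨x, hx⟩ := hQ
  obtain ⟨X, hX⟩ := sing_exists' hS x
  obtain ⟨M, ⟨m, hm, hmM⟩, hmin⟩ :=
    hS.wf (fun V => ∃ y, Q y ∧ S.isSing y V) ⟨X, x, hx, hX⟩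
  refine ⟨m, hm, fun y hy hlt => ?_⟩
  obtain ⟨Y, hY⟩ := sing_exists' hS y
  exact hmin Y ⟨y, hy, hY⟩ (hlt Y M hY hmM)

/-- the class of predecessors of `x` has limit `x` -/
lemma isLim_pred' (hS : S.Axioms) {x : O} {X : C} (hX : ∀ k, S.mem k X ↔ S.lt k x) :
    S.isLim X x := by
  constructor
  · exact fun k hk => (hX k).1 hk
  · intro l' h
    rcases lt_trichotomy' hS x l' with h1 | h1 | h1
    · exact Or.inr h1
    · exact Or.inl h1
    · exact absurd (h l' ((hX l').2 h1)) (lt_irrefl' hS l')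

/-- no class contains its own index -/
lemma not_mem_self_index' (hS : S.Axioms) {X : C} {i : O} (hX : S.iota X i) :
    ¬ S.mem i X := by
  intro hmem
  obtain ⟨W, ⟨j, hWj, hjW⟩, hmin⟩ :=
    hS.wf (fun V => ∃ k, S.iota V k ∧ S.mem k V) ⟨X, i, hX, hmem⟩
  obtain ⟨T, hT⟩ := hS.comp (fun k => S.lt k j)
  have hlim : S.isLim T j := isLim_pred' hS hT
  have hTW : S.prec T W := hS.respective T W j j hlim (Or.inr rfl) hjW
  obtain ⟨t, ht⟩ := hS.indexing T ⟨j, hlim⟩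
  have htj : S.lt t j := (hS.iota_spec W j hWj).1 T t hTW ht
  exact hmin T ⟨t, ht, (hT t).2 htj⟩ hTW

/-- Proposition III: every ordinal is an index -/
lemma every_index' (hS : S.Axioms) (x : O) : ∃ V, S.iota V x := by
  obtain ⟨X, hX⟩ := hS.comp (fun k => S.lt k x)
  have hlim : S.isLim X x := isLim_pred' hS hX
  obtain ⟨i, hi⟩ := hS.indexing X ⟨x, hlim⟩
  have hix : ¬ S.lt i x := fun h => not_mem_self_index' hS hi ((hX i).2 h)
  obtain ⟨j, ⟨W, hWj, hjx⟩, hjmin⟩ :=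
    wf_lt' hS (fun j => ∃ W, S.iota W j ∧ ¬ S.lt j x) ⟨i, X, hi, hix⟩
  have hxj : S.le x j := by
    rcases lt_trichotomy' hS x j with h | h | h
    · exact Or.inr h
    · exact Or.inl h
    · exact absurd h hjx
  have hb : ∀ Z k, S.prec Z W → S.iota Z k → S.lt k x := by
    intro Z k hZ hk
    have hkj : S.lt k j := (hS.iota_spec W j hWj).1 Z k hZ hk
    by_contra hkx
    exact hjmin k ⟨Z, hk, hkx⟩ hkj
  have hjx2 : S.le j x := (hS.iota_spec W j hWj).2 x hb
  have : j = x := le_antisymm' hS hjx2 hxj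
  exact ⟨W, this ▸ hWj⟩

lemma equiv_indexSpec' (hS : S.Axioms) {X X' : C} {i : O} (he : S.equiv X X')
    (hs : S.indexSpec X i) : S.indexSpec X' i := by
  constructor
  · intro Y j hp hj
    exact hs.1 Y j (prec_congr_right' hS (equiv_symm' he) hp) hj
  · intro i' h
    exact hs.2 i' (fun Y j hp hj => h Y j (prec_congr_right' hS he hp) hj)

lemma indexSpec_unique' (hS : S.Axioms) {X : C} {i i' : O} (h1 : S.indexSpec X i)
    (h2 : S.indexSpec X i') : i = i' :=
  le_antisymm' hS (h1.2 i' h2.1) (h2.2 i h1.1)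

/-- iota is injective up to coextensionality -/
lemma iota_inj' (hS : S.Axioms) {V V' : C} {i : O} (h : S.iota V i) (h' : S.iota V' i) :
    S.equiv V V' := by
  by_contra hne
  rcases (hS.coConnected V V').1 hne with hp | hp
  · exact lt_irrefl' hS i ((hS.iota_spec V' i h').1 V i hp h)
  · exact lt_irrefl' hS i ((hS.iota_spec V i h).1 V' i hp h')

lemma iota_equiv_eq' (hS : S.Axioms) {V V' : C} {x y : O} (he : S.equiv V V')
    (h : S.iota V x) (h' : S.iota V' y) : x = y :=
  indexSpec_unique' hS (hS.iota_spec V x h)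
    (equiv_indexSpec' hS (equiv_symm' he) (hS.iota_spec V' y h'))

end Lemmas

end COT

/-- Extensionality for the interpreted membership `∈*` in COT: ordinals with
the same `∈*`-elements are equal. -/
theorem COT.memStar_extensionality {O C : Type*} (S : COT O C) (hS : S.Axioms) :
    ∀ x y : O, (∀ z, S.memStar z x ↔ S.memStar z y) → x = y := by
  intro x y h
  obtain ⟨V, hV⟩ := every_index' hS x
  obtain ⟨V', hV'⟩ := every_index' hS y
  have he : S.equiv V V' := by
    intro z
    constructor
    · intro hz
      obtain ⟨U, hzU, hU⟩ := (h z).1 ⟨V, hz, hV⟩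
      exact (iota_inj' hS hU hV' z).1 hzU
    · intro hz
      obtain ⟨U, hzU, hU⟩ := (h z).2 ⟨V', hz, hV'⟩
      exact (iota_inj' hS hU hV z).1 hzU
  exact iota_equiv_eq' hS he hV hV'
end

section
/- In COT, if X is a bounded class then every subclass of X (given by Comprehension restricted to elements of X) is bounded, and hence has an ordinal index; consequently the Separation scheme holds for the membership relation y ∈* x iff ∃X: y ε X ∧ x = ι(X). -/
section AuxLemmas

variable {O C : Type*} (S : COT O C) (hS : S.Axioms)
include hS

lemma COT.sing_exists (x : O) : ∃ X, S.isSing x X := hS.comp (· = x)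

lemma COT.equiv_of_sing_sing {x : O} {X Y : C} (hX : S.isSing x X) (hY : S.isSing x Y) :
    S.equiv X Y := fun z => (hX z).trans (hY z).symm

lemma COT.not_prec_of_equiv {X Y : C} (h : S.equiv X Y) : ¬ S.prec X Y := fun hp =>
  ((hS.coConnected X Y).mpr (Or.inl hp)) h

lemma COT.prec_congr {X X' Y Y' : C} (hX : S.equiv X X') (hY : S.equiv Y Y')
    (h : S.prec X Y) : S.prec X' Y' := by
  have h1 : S.prec X' Y := by
    have hne : ¬ S.equiv X' Y := fun he =>
      COT.not_prec_of_equiv S hS (fun z => (hX z).trans (he z)) h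
    rcases (hS.coConnected X' Y).mp hne with h' | h'
    · exact h'
    · exact absurd (hS.prec_trans _ _ _ h h') (COT.not_prec_of_equiv S hS hX)
  have hne : ¬ S.equiv X' Y' := fun he =>
    COT.not_prec_of_equiv S hS (fun z => (he z).trans (hY z).symm) h1
  rcases (hS.coConnected X' Y').mp hne with h' | h'
  · exact h'
  · exact absurd (hS.prec_trans _ _ _ h' h1)
      (COT.not_prec_of_equiv S hS (fun z => (hY z).symm))

lemma COT.lt_of_prec {x y : O} {X Y : C} (hX : S.isSing x X) (hY : S.isSing y Y)
    (h : S.prec X Y) : S.lt x y := fun X' Y' hX' hY' =>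
  COT.prec_congr S hS (COT.equiv_of_sing_sing S hS hX hX')
    (COT.equiv_of_sing_sing S hS hY hY') h

lemma COT.lt_irrefl (x : O) : ¬ S.lt x x := fun h => by
  obtain ⟨X, hX⟩ := COT.sing_exists S hS x
  exact COT.not_prec_of_equiv S hS (fun z => Iff.rfl) (h X X hX hX)

lemma COT.lt_trans'_s19 {x y z : O} (h1 : S.lt x y) (h2 : S.lt y z) : S.lt x z := by
  obtain ⟨X, hX⟩ := COT.sing_exists S hS x
  obtain ⟨Y, hY⟩ := COT.sing_exists S hS y
  obtain ⟨Z, hZ⟩ := COT.sing_exists S hS z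
  exact COT.lt_of_prec S hS hX hZ (hS.prec_trans _ _ _ (h1 X Y hX hY) (h2 Y Z hY hZ))

lemma COT.trichotomy (x y : O) : x = y ∨ S.lt x y ∨ S.lt y x := by
  obtain ⟨X, hX⟩ := COT.sing_exists S hS x
  obtain ⟨Y, hY⟩ := COT.sing_exists S hS y
  by_cases h : S.equiv X Y
  · exact Or.inl ((hY x).mp ((h x).mp ((hX x).mpr rfl)))
  · rcases (hS.coConnected X Y).mp h with h' | h'
    · exact Or.inr (Or.inl (COT.lt_of_prec S hS hX hY h'))
    · exact Or.inr (Or.inr (COT.lt_of_prec S hS hY hX h'))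

lemma COT.le_trans' {x y z : O} (h1 : S.le x y) (h2 : S.le y z) : S.le x z := by
  rcases h1 with h1 | rfl
  · rcases h2 with h2 | rfl
    · exact Or.inl (COT.lt_trans'_s19 S hS h1 h2)
    · exact Or.inl h1
  · exact h2

lemma COT.bnd_of_ub {Y : C} (h : ∃ l, ∀ x, S.mem x Y → S.lt x l) : S.bnd Y := by
  obtain ⟨l, hl⟩ := h
  obtain ⟨L, hL⟩ := COT.sing_exists S hS l
  obtain ⟨M, ⟨m, hm, hub⟩, hmin⟩ :=
    hS.wf (fun W => ∃ z, S.isSing z W ∧ ∀ x, S.mem x Y → S.lt x z) ⟨L, l, hL, hl⟩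
  refine ⟨m, hub, fun l' hl' => ?_⟩
  rcases COT.trichotomy S hS m l' with h | h | h
  · exact Or.inr h
  · exact Or.inl h
  · obtain ⟨L', hL'⟩ := COT.sing_exists S hS l'
    exact absurd (h L' M hL' hm) (hmin L' ⟨l', hL', hl'⟩)

lemma COT.subclass_bnd {X Y : C} (hX : S.bnd X) (hYX : S.subclass Y X) : S.bnd Y := by
  obtain ⟨l, hl, _⟩ := hX
  exact COT.bnd_of_ub S hS ⟨l, fun x hx => hl x (hYX x hx)⟩

lemma COT.iota_inj {X X' : C} {i : O} (h : S.iota X i) (h' : S.iota X' i) :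
    S.equiv X X' := by
  by_contra hne
  rcases (hS.coConnected X X').mp hne with hp | hp
  · exact COT.lt_irrefl S hS i ((hS.iota_spec X' i h').1 X i hp h)
  · exact COT.lt_irrefl S hS i ((hS.iota_spec X i h).1 X' i hp h')

lemma COT.memStar_iff {X : C} {a : O} (h : S.iota X a) (y : O) :
    S.memStar y a ↔ S.mem y X := by
  constructor
  · rintro ⟨X', hy, hX'⟩; exact (COT.iota_inj S hS hX' h y).mp hy
  · exact fun hy => ⟨X, hy, h⟩

/-- For any ordinal `z` there is a class realizing `{w : w < z}`, which is
bounded, indexed, and whose limit is `≤ z`. -/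
lemma COT.seg (z : O) : ∃ (W : C) (k m : O), (∀ w, S.mem w W ↔ S.lt w z) ∧
    S.iota W k ∧ S.isLim W m ∧ S.le m z := by
  obtain ⟨W, hW⟩ := hS.comp (fun w => S.lt w z)
  have hb : S.bnd W := COT.bnd_of_ub S hS ⟨z, fun x hx => (hW x).mp hx⟩
  obtain ⟨k, hk⟩ := hS.indexing W hb
  obtain ⟨m, hm⟩ := hb
  exact ⟨W, k, m, hW, hk, hm, hm.2 z (fun x hx => (hW x).mp hx)⟩

lemma COT.indexed_bnd {X : C} {i : O} (h : S.iota X i) : S.bnd X := by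
  by_contra hnb
  have hcof : ∀ l : O, ∃ y, S.mem y X ∧ S.le l y := by
    intro l
    by_contra hno
    push_neg at hno
    apply hnb
    refine COT.bnd_of_ub S hS ⟨l, fun x hx => ?_⟩
    rcases COT.trichotomy S hS x l with h' | h' | h'
    · exact absurd (Or.inr h'.symm) (hno x hx)
    · exact h'
    · exact absurd (Or.inl h') (hno x hx)
  -- the descending chain argument
  obtain ⟨Wi, j, m, hWi, hj, hlim, hle⟩ := COT.seg S hS i
  have hji : S.lt j i := by
    obtain ⟨y, hy, hiy⟩ := hcof i
    have hprec : S.prec Wi X :=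
      hS.respective Wi X m y hlim (COT.le_trans' S hS hle hiy) hy
    exact (hS.iota_spec X i h).1 Wi j hprec hj
  obtain ⟨Si, hSi⟩ := COT.sing_exists S hS i
  obtain ⟨M, ⟨z, Wz, k, hMz, hWz, hk, hkz⟩, hmin⟩ :=
    hS.wf (fun W' => ∃ (z : O) (Wz : C) (k : O), S.isSing z W' ∧
      (∀ w, S.mem w Wz ↔ S.lt w z) ∧ S.iota Wz k ∧ S.lt k z)
      ⟨Si, i, Wi, j, hSi, hWi, hj, hji⟩
  obtain ⟨Wk, k', m', hWk, hk', hlim', hle'⟩ := COT.seg S hS k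
  have hprec : S.prec Wk Wz :=
    hS.respective Wk Wz m' k hlim' hle' ((hWz k).mpr hkz)
  have hk'k : S.lt k' k := (hS.iota_spec Wz k hk).1 Wk k' hprec hk'
  obtain ⟨Sk, hSk⟩ := COT.sing_exists S hS k
  exact absurd (hkz Sk M hSk hMz) (hmin Sk ⟨k, Wk, k', hSk, hWk, hk', hk'k⟩)

lemma COT.empty_indexed : ∃ (E : C) (e : O), (∀ z, ¬ S.mem z E) ∧ S.iota E e := by
  obtain ⟨E, hE⟩ := hS.comp (fun _ => False)
  obtain ⟨l, _, _⟩ := hS.infinity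
  have hb : S.bnd E := COT.bnd_of_ub S hS ⟨l, fun x hx => absurd ((hE x).mp hx) id⟩
  obtain ⟨e, he⟩ := hS.indexing E hb
  exact ⟨E, e, fun z hz => (hE z).mp hz, he⟩

end AuxLemmas

/-- In COT every subclass of a bounded class is bounded and hence indexed;
consequently Separation holds for the interpreted membership `∈*`. -/
theorem COT.subclass_bnd_and_separation {O C : Type*} (S : COT O C) (hS : S.Axioms) :
    (∀ X Y : C, S.bnd X → S.subclass Y X → S.bnd Y ∧ ∃ i, S.iota Y i) ∧
      (∀ (φ : O → Prop) (a : O), ∃ x : O,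
        ∀ y, S.memStar y x ↔ S.memStar y a ∧ φ y) := by
  constructor
  · intro X Y hX hYX
    have hb := COT.subclass_bnd S hS hX hYX
    exact ⟨hb, hS.indexing Y hb⟩
  · intro φ a
    by_cases ha : ∃ X, S.iota X a
    · obtain ⟨X, hXa⟩ := ha
      have hXb := COT.indexed_bnd S hS hXa
      obtain ⟨Z, hZ⟩ := hS.comp (fun y => S.memStar y a ∧ φ y)
      have hZb : S.bnd Z := COT.subclass_bnd S hS hXb
        (fun z hz => (COT.memStar_iff S hS hXa z).mp ((hZ z).mp hz).1)
      obtain ⟨x, hx⟩ := hS.indexing Z hZb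
      exact ⟨x, fun y => (COT.memStar_iff S hS hx y).trans (hZ y)⟩
    · obtain ⟨E, e, hE, hEe⟩ := COT.empty_indexed S hS
      refine ⟨e, fun y => ?_⟩
      rw [COT.memStar_iff S hS hEe y]
      constructor
      · exact fun h => absurd h (hE y)
      · rintro ⟨⟨X, _, hX⟩, _⟩
        exact absurd ⟨X, hX⟩ ha
end
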